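/- arXiv:2406.11722 — 2 statements merged into one kernel-verified Lean document; each statement's English description precedes it below -/
import Mathlib

section
/- Let f : X → Y and g : Y → X be 1-Lipschitz maps of metric spaces such that gf fixes every point of ρX and fg fixes every point of ρY. Then f and g restrict to mutually inverse isometries between ρX and ρY. -/
def Adjacent {X : Type*} [MetricSpace X] (x y : X) : Prop :=
  x ≠ y ∧ ¬ ∃ p, p ≠ x ∧ p ≠ y ∧ dist x p + dist p y = dist x y

def innerBoundary (X : Type*) [MetricSpace X] : Set X :=
  {x | ∃ y, Adjacent x y}

lemma adj_symm' {X : Type*} [MetricSpace X] {x y : X} (h : Adjacent x y) : Adjacent y x := by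
  obtain ⟨h1, h2⟩ := h
  refine ⟨h1.symm, fun ⟨p, hp1, hp2, hp3⟩ => h2 ⟨p, hp2, hp1, ?_⟩⟩
  rw [dist_comm y p, dist_comm p x, dist_comm y x] at hp3
  linarith

lemma isom' {X Y : Type*} [MetricSpace X] [MetricSpace Y]
    (f : X → Y) (g : Y → X)
    (hf : ∀ x x' : X, dist (f x) (f x') ≤ dist x x')
    (hg : ∀ y y' : Y, dist (g y) (g y') ≤ dist y y')
    (hgf : ∀ x ∈ innerBoundary X, g (f x) = x) :
    ∀ x ∈ innerBoundary X, ∀ x' ∈ innerBoundary X, dist (f x) (f x') = dist x x' := by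
  intro x hx x' hx'
  refine le_antisymm (hf x x') ?_
  have := hg (f x) (f x')
  rwa [hgf x hx, hgf x' hx'] at this

lemma key' {X Y : Type*} [MetricSpace X] [MetricSpace Y]
    (f : X → Y) (g : Y → X)
    (hf : ∀ x x' : X, dist (f x) (f x') ≤ dist x x')
    (hg : ∀ y y' : Y, dist (g y) (g y') ≤ dist y y')
    (hgf : ∀ x ∈ innerBoundary X, g (f x) = x) :
    f '' innerBoundary X ⊆ innerBoundary Y := by
  rintro _ ⟨x, hx, rfl⟩
  obtain ⟨z, hxz⟩ := hx
  have hxX : x ∈ innerBoundary X := ⟨z, hxz⟩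
  have hzX : z ∈ innerBoundary X := ⟨x, adj_symm' hxz⟩
  have hd : dist (f x) (f z) = dist x z := isom' f g hf hg hgf x hxX z hzX
  refine ⟨f z, fun h => hxz.1 (by rw [← hgf x hxX, ← hgf z hzX, h]), ?_⟩
  rintro ⟨q, hq1, hq2, hq3⟩
  have h1 : dist x (g q) ≤ dist (f x) q := by
    calc dist x (g q) = dist (g (f x)) (g q) := by rw [hgf x hxX]
    _ ≤ dist (f x) q := hg _ _
  have h2 : dist (g q) z ≤ dist q (f z) := by
    calc dist (g q) z = dist (g q) (g (f z)) := by rw [hgf z hzX]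
    _ ≤ dist q (f z) := hg _ _
  have h3 : dist x z ≤ dist x (g q) + dist (g q) z := dist_triangle _ _ _
  have heq1 : dist x (g q) = dist (f x) q := by linarith
  have heq2 : dist (g q) z = dist q (f z) := by linarith
  by_cases hgx : g q = x
  · have : dist (f x) q = 0 := by rw [← heq1, hgx, dist_self]
    exact hq1 (dist_eq_zero.mp this).symm
  by_cases hgz : g q = z
  · have : dist q (f z) = 0 := by rw [← heq2, hgz, dist_self]
    exact hq2 (dist_eq_zero.mp this)
  exact hxz.2 ⟨g q, hgx, hgz, by linarith⟩

theorem stmt_9 {X Y : Type*} [MetricSpace X] [MetricSpace Y]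
    (f : X → Y) (g : Y → X)
    (hf : ∀ x x' : X, dist (f x) (f x') ≤ dist x x')
    (hg : ∀ y y' : Y, dist (g y) (g y') ≤ dist y y')
    (hgf : ∀ x ∈ innerBoundary X, g (f x) = x)
    (hfg : ∀ y ∈ innerBoundary Y, f (g y) = y) :
    f '' innerBoundary X ⊆ innerBoundary Y ∧
    g '' innerBoundary Y ⊆ innerBoundary X ∧
    (∀ x ∈ innerBoundary X, ∀ x' ∈ innerBoundary X,
      dist (f x) (f x') = dist x x') ∧
    (∀ y ∈ innerBoundary Y, ∀ y' ∈ innerBoundary Y,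
      dist (g y) (g y') = dist y y') :=
  ⟨key' f g hf hg hgf, key' g f hg hf hfg, isom' f g hf hg hgf, isom' g f hg hf hfg⟩
end

section
/- For a nonconvex closed subset X of ℝ^N, metric projection onto the closed convex hull of the inner boundary, cconv(ρX), maps X into core(X) = cconv(ρX) ∩ X. In particular, every point of X has a unique closest point in core(X). -/
def AdjIn {E : Type*} [MetricSpace E] (X : Set E) (x y : E) : Prop :=
  x ∈ X ∧ y ∈ X ∧ x ≠ y ∧
    ¬ ∃ p ∈ X, p ≠ x ∧ p ≠ y ∧ dist x p + dist p y = dist x y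

def innerBdry {E : Type*} [MetricSpace E] (X : Set E) : Set E :=
  {x | ∃ y, AdjIn X x y}

/-- The core of a Euclidean set: the intersection of the set with the closed
convex hull of its inner boundary. -/
def core {N : ℕ} (X : Set (EuclideanSpace ℝ (Fin N))) : Set (EuclideanSpace ℝ (Fin N)) :=
  closure (convexHull ℝ (innerBdry X)) ∩ X

/-!
Let `m` be the point of `K = cconv(ρX)` nearest to `x ∈ X`, and `H` the open half-space of
points `y` with `⟪x - m, y - m⟫ > 0`; it misses `K`. A chord of `X` leaves `X` only across a
gap whose endpoints are adjacent, hence lie in `ρX`; so chords of `X` meet `H` only inside `X`.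
Slicing triangles by hyperplanes parallel to `∂H` propagates this to segments from `x` to points
of `conv(ρX)`. On such segments ending close to `m`, the points just inside `H` lie in `X` and
converge to `m`, so `m ∈ X` because `X` is closed.
-/

open Set

theorem AdjIn.symm {E : Type*} [MetricSpace E] {X : Set E} {x y : E} (h : AdjIn X x y) :
    AdjIn X y x := by
  obtain ⟨hx, hy, hxy, hbtw⟩ := h
  refine ⟨hy, hx, hxy.symm, fun ⟨p, hp, hpy, hpx, hd⟩ => hbtw ⟨p, hp, hpx, hpy, ?_⟩⟩
  rw [dist_comm x p, dist_comm p y, dist_comm x y]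
  linarith

theorem innerBdry_subset {E : Type*} [MetricSpace E] (X : Set E) : innerBdry X ⊆ X :=
  fun _ ⟨_, h⟩ => h.1

theorem IsClosed.exists_Ioo_disjoint {S : Set ℝ} (hS : IsClosed S) {a b s : ℝ} (ha : a ∈ S)
    (hb : b ∈ S) (has : a ≤ s) (hsb : s ≤ b) (hs : s ∉ S) :
    ∃ s₁ ∈ S, ∃ s₂ ∈ S, s ∈ Ioo s₁ s₂ ∧ Disjoint (Ioo s₁ s₂) S := by
  have hbdd₁ : BddAbove (S ∩ Iic s) := ⟨s, fun _ h => h.2⟩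
  have hbdd₂ : BddBelow (S ∩ Ici s) := ⟨s, fun _ h => h.2⟩
  obtain ⟨hs₁S, hs₁s⟩ := (hS.inter isClosed_Iic).csSup_mem ⟨a, ha, has⟩ hbdd₁
  obtain ⟨hs₂S, hs₂s⟩ := (hS.inter isClosed_Ici).csInf_mem ⟨b, hb, hsb⟩ hbdd₂
  refine ⟨_, hs₁S, _, hs₂S, ⟨hs₁s.lt_of_ne ?_, lt_of_le_of_ne hs₂s ?_⟩, ?_⟩
  · exact fun h => hs (h ▸ hs₁S)
  · exact fun h => hs (h ▸ hs₂S)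
  refine disjoint_left.2 fun u ⟨hu₁, hu₂⟩ huS => ?_
  rcases le_total u s with hus | hsu
  · exact hu₁.not_ge (le_csSup hbdd₁ ⟨huS, hus⟩)
  · exact hu₂.not_ge (csInf_le hbdd₂ ⟨huS, hsu⟩)

section StrictConvex

variable {E : Type*} [NormedAddCommGroup E] [NormedSpace ℝ E] [StrictConvexSpace ℝ E]
  {X : Set E}

theorem adjIn_of_disjoint_openSegment {x y : E} (hx : x ∈ X) (hy : y ∈ X) (hxy : x ≠ y)
    (h : Disjoint (openSegment ℝ x y) X) : AdjIn X x y := by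
  refine ⟨hx, hy, hxy, fun ⟨p, hp, hpx, hpy, hd⟩ => disjoint_left.1 h ?_ hp⟩
  exact mem_openSegment_of_ne_left_right hpx.symm hpy.symm
    (mem_segment_iff_wbtw.2 (dist_add_dist_eq_iff.1 hd))

theorem exists_adjIn_mem_openSegment (hX : IsClosed X) {a b t : E} (ha : a ∈ X) (hb : b ∈ X)
    (ht : t ∈ segment ℝ a b) (htX : t ∉ X) :
    ∃ e₁ e₂, AdjIn X e₁ e₂ ∧ t ∈ openSegment ℝ e₁ e₂ := by
  set φ : ℝ →ᵃ[ℝ] E := AffineMap.lineMap a b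
  rw [segment_eq_image_lineMap] at ht
  obtain ⟨s, ⟨hs₀, hs₁⟩, rfl⟩ := ht
  obtain ⟨s₁, hs₁X, s₂, hs₂X, hs, hdisj⟩ :=
    (hX.preimage (AffineMap.lineMap_continuous (p := a) (q := b))).exists_Ioo_disjoint
      (a := 0) (b := 1) (by simpa [φ]) (by simpa [φ]) hs₀ hs₁ htX
  have himage : openSegment ℝ (φ s₁) (φ s₂) = φ '' Ioo s₁ s₂ := by
    rw [← image_openSegment, openSegment_eq_Ioo (hs.1.trans hs.2)]
  have hmem : φ s ∈ openSegment ℝ (φ s₁) (φ s₂) := himage ▸ mem_image_of_mem φ hs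
  refine ⟨φ s₁, φ s₂, adjIn_of_disjoint_openSegment hs₁X hs₂X ?_ ?_, hmem⟩
  · intro heq
    rw [heq, openSegment_same, mem_singleton_iff] at hmem
    exact htX (hmem ▸ hs₂X)
  · rw [himage, disjoint_image_left]
    exact hdisj

theorem segment_subset_union_convexHull_innerBdry (hX : IsClosed X) {a b : E} (ha : a ∈ X)
    (hb : b ∈ X) : segment ℝ a b ⊆ X ∪ convexHull ℝ (innerBdry X) := by
  intro t ht
  by_cases htX : t ∈ X
  · exact Or.inl htX
  obtain ⟨e₁, e₂, hadj, hte⟩ := exists_adjIn_mem_openSegment hX ha hb ht htX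
  exact Or.inr <| segment_subset_convexHull (s := innerBdry X) ⟨e₂, hadj⟩ ⟨e₁, hadj.symm⟩
    (openSegment_subset_segment ℝ _ _ hte)

theorem innerBdry_nonempty_of_not_convex (hX : IsClosed X) (hnc : ¬Convex ℝ X) :
    (innerBdry X).Nonempty := by
  rw [nonempty_iff_ne_empty]
  refine fun hempty => hnc <| convex_iff_segment_subset.2 fun a ha b hb => ?_
  simpa [hempty] using segment_subset_union_convexHull_innerBdry hX ha hb
end StrictConvex

section LevelPoint

variable {E : Type*} [AddCommGroup E] [Module ℝ E] {x q : E} {r : ℝ}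

noncomputable def levelPoint (f : E → ℝ) (x q : E) (r : ℝ) : E :=
  AffineMap.lineMap x q ((f x - r) / (f x - f q))

theorem levelPoint_mem_segment (f : E → ℝ) (hqr : f q < r) (hrx : r ≤ f x) :
    levelPoint f x q r ∈ segment ℝ x q := by
  rw [segment_eq_image_lineMap]
  exact ⟨_, ⟨div_nonneg (by linarith) (by linarith), (div_le_one (by linarith)).2 (by linarith)⟩,
    rfl⟩

variable {F : Type*} [FunLike F E ℝ] [LinearMapClass F ℝ E ℝ] (f : F)

theorem map_lineMap (x q : E) (s : ℝ) :
    f (AffineMap.lineMap x q s) = AffineMap.lineMap (f x) (f q) s := by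
  simp only [AffineMap.lineMap_apply_module, map_add, map_smul, smul_eq_mul]

theorem map_le_max_of_mem_segment {t : E} (ht : t ∈ segment ℝ x q) :
    f t ≤ max (f x) (f q) := by
  rw [segment_eq_image_lineMap] at ht
  obtain ⟨s, hs, rfl⟩ := ht
  rw [map_lineMap]
  exact (segment_eq_Icc' (f x) (f q) ▸ segment_eq_image_lineMap ℝ (f x) (f q) ▸
    mem_image_of_mem _ hs).2

theorem map_levelPoint (hq : f q ≠ f x) : f (levelPoint f x q r) = r := by
  rw [levelPoint, map_lineMap, AffineMap.lineMap_apply_ring']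
  field_simp [sub_ne_zero.2 hq.symm]
  ring

theorem levelPoint_map_eq_of_mem_segment {t : E} (ht : t ∈ segment ℝ x q) (hq : f q ≠ f x) :
    levelPoint f x q (f t) = t := by
  rw [segment_eq_image_lineMap] at ht
  obtain ⟨s, -, rfl⟩ := ht
  have hs : (f x - AffineMap.lineMap (f x) (f q) s) / (f x - f q) = s := by
    rw [AffineMap.lineMap_apply_ring']
    field_simp [sub_ne_zero.2 hq.symm]
    ring
  rw [levelPoint, map_lineMap, hs]

theorem levelPoint_mem_segment_levelPoint {q₁ q₂ : E} (hq : q ∈ segment ℝ q₁ q₂)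
    (h₁ : f q₁ < f x) (h₂ : f q₂ < f x) :
    levelPoint f x q r ∈ segment ℝ (levelPoint f x q₁ r) (levelPoint f x q₂ r) := by
  have hqx : f q < f x := (map_le_max_of_mem_segment f hq).trans_lt (max_lt h₁ h₂)
  obtain ⟨c₁, c₂, hc₁, hc₂, hc, rfl⟩ := hq
  have hd₁ : f x - f q₁ ≠ 0 := (sub_pos.2 h₁).ne'
  have hd₂ : f x - f q₂ ≠ 0 := (sub_pos.2 h₂).ne'
  have hfq : f x - f (c₁ • q₁ + c₂ • q₂) = c₁ * (f x - f q₁) + c₂ * (f x - f q₂) := by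
    rw [map_add, map_smul, map_smul, smul_eq_mul, smul_eq_mul]
    linear_combination -(f x) * hc
  have hpos : 0 < c₁ * (f x - f q₁) + c₂ * (f x - f q₂) := hfq ▸ sub_pos.2 hqx
  -- `y ↦ levelPoint f x y r` is a perspective map centred at `x`, whence these weights.
  refine ⟨c₁ * (f x - f q₁) / (c₁ * (f x - f q₁) + c₂ * (f x - f q₂)),
    c₂ * (f x - f q₂) / (c₁ * (f x - f q₁) + c₂ * (f x - f q₂)),
    div_nonneg (mul_nonneg hc₁ (sub_pos.2 h₁).le) hpos.le,
    div_nonneg (mul_nonneg hc₂ (sub_pos.2 h₂).le) hpos.le, ?_, ?_⟩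
  · field_simp
  · simp only [levelPoint, AffineMap.lineMap_apply_module, hfq]
    match_scalars <;> field_simp
    linear_combination -(f x - r) * hc

theorem segment_inter_subset_of_mem_convexHull {X A : Set E} (c : ℝ) (hAX : A ⊆ X)
    (hA : ∀ a ∈ A, f a ≤ c) (hX : ∀ a ∈ X, ∀ b ∈ X, segment ℝ a b ∩ {y | c < f y} ⊆ X)
    (hx : x ∈ X) (hq : q ∈ convexHull ℝ A) : segment ℝ x q ∩ {y | c < f y} ⊆ X := by
  suffices convexHull ℝ A ⊆ {q | f q ≤ c ∧ segment ℝ x q ∩ {y | c < f y} ⊆ X} from (this hq).2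
  refine convexHull_min (fun a ha => ⟨hA a ha, hX x hx a (hAX ha)⟩) ?_
  rintro q₁ ⟨hq₁c, hq₁X⟩ q₂ ⟨hq₂c, hq₂X⟩ c₁ c₂ hc₁ hc₂ hc
  have hq : c₁ • q₁ + c₂ • q₂ ∈ segment ℝ q₁ q₂ := ⟨c₁, c₂, hc₁, hc₂, hc, rfl⟩
  have hqc : f (c₁ • q₁ + c₂ • q₂) ≤ c :=
    (map_le_max_of_mem_segment f hq).trans (max_le hq₁c hq₂c)
  refine ⟨hqc, fun t ⟨ht, (htc : c < f t)⟩ => ?_⟩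
  -- Slicing the triangle `x q₁ q₂` at the level of `t` gives a chord of `X` through `t`.
  have htx : f t ≤ f x :=
    ((le_max_iff.1 (map_le_max_of_mem_segment f ht)).resolve_right (by linarith))
  have hq₁x : f q₁ < f x := by linarith
  have hq₂x : f q₂ < f x := by linarith
  have hα : levelPoint f x q₁ (f t) ∈ X := hq₁X ⟨levelPoint_mem_segment f (by linarith) htx,
    show c < f _ by rwa [map_levelPoint f hq₁x.ne]⟩
  have hβ : levelPoint f x q₂ (f t) ∈ X := hq₂X ⟨levelPoint_mem_segment f (by linarith) htx,
    show c < f _ by rwa [map_levelPoint f hq₂x.ne]⟩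
  have htαβ := levelPoint_mem_segment_levelPoint f (r := f t) hq hq₁x hq₂x
  rw [levelPoint_map_eq_of_mem_segment f ht (by linarith : f _ < f x).ne] at htαβ
  exact hX _ hα _ hβ ⟨htαβ, htc⟩

open Filter Topology in
theorem IsClosed.mem_of_segment_inter_subset [TopologicalSpace E] [IsTopologicalAddGroup E]
    [ContinuousSMul ℝ E] {X C : Set E} (hX : IsClosed X) (hf : Continuous f) {c : ℝ} {m : E}
    (hxc : c < f x) (hC : ∀ q ∈ C, f q ≤ c) (hm : m ∈ closure C) (hmc : f m = c)
    (hseg : ∀ q ∈ C, segment ℝ x q ∩ {y | c < f y} ⊆ X) : m ∈ X := by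
  have : (𝓝[C] m).NeBot := mem_closure_iff_nhdsWithin_neBot.1 hm
  have hcont : ContinuousAt (fun p : E × ℝ => levelPoint f x p.1 p.2) (m, c) := by
    simp only [levelPoint, AffineMap.lineMap_apply_module]
    fun_prop (disch := simpa [sub_eq_zero, hmc] using hxc.ne')
  have hlim : Tendsto (fun p : E × ℝ => levelPoint f x p.1 p.2) (𝓝[C] m ×ˢ 𝓝[>] c) (𝓝 m) := by
    have hm' : levelPoint f x m c = m :=
      hmc ▸ levelPoint_map_eq_of_mem_segment f (right_mem_segment ℝ x m) (hmc ▸ hxc.ne)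
    have h := hcont.tendsto
    rw [hm'] at h
    exact h.mono_left
      ((Filter.prod_mono nhdsWithin_le_nhds nhdsWithin_le_nhds).trans nhds_prod_eq.ge)
  refine hX.mem_of_tendsto hlim ?_
  filter_upwards [prod_mem_prod self_mem_nhdsWithin (Ioc_mem_nhdsGT hxc)] with ⟨q, r⟩ ⟨hq, hr⟩
  have hqr : f q < r := (hC q hq).trans_lt hr.1
  exact hseg q hq ⟨levelPoint_mem_segment f hqr hr.2,
    show c < f _ by rw [map_levelPoint f (hqr.trans_le hr.2).ne]; exact hr.1⟩
end LevelPoint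

section InnerProductSpace

open scoped RealInnerProductSpace

variable {E : Type*} [NormedAddCommGroup E] [InnerProductSpace ℝ E] {K : Set E} {x m p : E}

theorem IsComplete.exists_forall_dist_le (hc : IsComplete K) (hne : K.Nonempty)
    (hK : Convex ℝ K) (x : E) :
    ∃ m ∈ K, ∀ q ∈ K, dist x m ≤ dist x q := by
  obtain ⟨m, hm, heq⟩ := exists_norm_eq_iInf_of_complete_convex hne hc hK x
  refine ⟨m, hm, fun q hq => ?_⟩
  rw [dist_eq_norm, dist_eq_norm, heq]
  exact ciInf_le ⟨0, forall_mem_range.2 fun _ => norm_nonneg _⟩ (⟨q, hq⟩ : K)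

theorem Convex.real_inner_sub_le_zero_of_forall_dist_le (hK : Convex ℝ K) (hm : m ∈ K)
    (hmin : ∀ q ∈ K, dist x m ≤ dist x q) : ∀ q ∈ K, ⟪x - m, q - m⟫ ≤ 0 := by
  have : Nonempty K := ⟨⟨m, hm⟩⟩
  refine (norm_eq_iInf_iff_real_inner_le_zero hK hm).1 (le_antisymm (le_ciInf fun q => ?_)
    (ciInf_le ⟨0, forall_mem_range.2 fun _ => norm_nonneg _⟩ (⟨m, hm⟩ : K)))
  simpa only [dist_eq_norm] using hmin q q.2

theorem Convex.eq_of_forall_dist_le (hK : Convex ℝ K) (hm : m ∈ K) (hp : p ∈ K)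
    (hmmin : ∀ q ∈ K, dist x m ≤ dist x q) (hpmin : ∀ q ∈ K, dist x p ≤ dist x q) : p = m := by
  have hm' := hK.real_inner_sub_le_zero_of_forall_dist_le hm hmmin p hp
  have hp' := hK.real_inner_sub_le_zero_of_forall_dist_le hp hpmin m hm
  have hpm : ⟪p - m, p - m⟫ = ⟪x - m, p - m⟫ + ⟪x - p, m - p⟫ := by
    simp only [inner_sub_left, inner_sub_right, real_inner_comm]
    ring
  rw [← sub_eq_zero, ← real_inner_self_nonpos]
  linarith

theorem mem_of_forall_dist_le_closure_convexHull_innerBdry {X : Set E} (hX : IsClosed X)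
    (hx : x ∈ X) (hm : m ∈ closure (convexHull ℝ (innerBdry X)))
    (hmin : ∀ q ∈ closure (convexHull ℝ (innerBdry X)), dist x m ≤ dist x q) : m ∈ X := by
  obtain rfl | hxm := eq_or_ne x m
  · exact hx
  set f := innerSL ℝ (x - m)
  have hfK : ∀ q ∈ closure (convexHull ℝ (innerBdry X)), f q ≤ f m := fun q hq => by
    have := (convex_convexHull ℝ _).closure.real_inner_sub_le_zero_of_forall_dist_le hm hmin q hq
    rwa [inner_sub_right, sub_nonpos] at this
  have hfC : ∀ q ∈ convexHull ℝ (innerBdry X), f q ≤ f m := fun q hq => hfK q (subset_closure hq)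
  have hmx : f m < f x := by
    have := real_inner_self_pos.2 (sub_ne_zero.2 hxm)
    rwa [inner_sub_right, sub_pos] at this
  have hchord : ∀ a ∈ X, ∀ b ∈ X, segment ℝ a b ∩ {y | f m < f y} ⊆ X :=
    fun a ha b hb t ⟨ht, (htm : f m < f t)⟩ =>
      (segment_subset_union_convexHull_innerBdry hX ha hb ht).resolve_right
        fun htC => (hfC t htC).not_gt htm
  exact hX.mem_of_segment_inter_subset f f.continuous hmx hfC hm rfl fun q hq =>
    segment_inter_subset_of_mem_convexHull f (f m) (innerBdry_subset X)
      (fun a ha => hfC a (subset_convexHull ℝ _ ha)) hchord hx hq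

end InnerProductSpace

/-- For nonconvex closed `X ⊆ ℝ^N`, the metric projection of any `x ∈ X` onto
`cconv(ρX)` lands in `X`: that is, there is a unique point of `cconv(ρX)` closest
to `x`, and it lies in `core(X) = cconv(ρX) ∩ X`. -/
theorem stmt_14 {N : ℕ} (X : Set (EuclideanSpace ℝ (Fin N)))
    (hX : IsClosed X) (hnc : ¬ Convex ℝ X) :
    ∀ x ∈ X, ∃! p : EuclideanSpace ℝ (Fin N),
      p ∈ core X ∧
      ∀ q ∈ closure (convexHull ℝ (innerBdry X)), dist x p ≤ dist x q := by
  intro x hx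
  have hK : Convex ℝ (closure (convexHull ℝ (innerBdry X))) := (convex_convexHull ℝ _).closure
  obtain ⟨m, hmK, hmin⟩ := isClosed_closure.isComplete.exists_forall_dist_le
    (innerBdry_nonempty_of_not_convex hX hnc).convexHull.closure hK x
  exact ⟨m, ⟨⟨hmK, mem_of_forall_dist_le_closure_convexHull_innerBdry hX hx hmK hmin⟩, hmin⟩,
    fun p hp => hK.eq_of_forall_dist_le hmK hp.1.1 hmin hp.2⟩
end
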